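/- arXiv:2206.08051 — 2 statements merged into one kernel-verified Lean document; each statement's English description precedes it below -/
import Mathlib

section
/- Let ρ ∈ L¹(ℝⁿ) be a probability density whose support is all of ℝⁿ (the measure ρ dx assigns positive mass to every nonempty open set), and let ∅ ≠ E ⊆ ℝⁿ be a bounded measurable set. For a finite generator set P, let D_E(P) = max{ diam C(p) : p ∈ P, C(p) ∩ E ≠ ∅ } be the maximum diameter of a Voronoi cell of P intersecting E. Then, viewing D_E as a random variable in P sampled as m i.i.d. points from ρ dx, D_E converges in probability to 0 as m → ∞: for every ε > 0, the probability that D_E > ε tends to 0. -/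
/-! Cover the `3δ`-neighbourhood of `E` by finitely many balls of radius `δ / 2`. Each has
positive mass, so with probability tending to one every ball receives a sample; the generators
are then `δ`-dense near `E`, and since Voronoi cells are convex, every cell meeting `E` has
diameter at most `6δ`. -/

open MeasureTheory Metric Set Filter

noncomputable section

/-- The Voronoi cell of a generator `p` w.r.t. the finite set of generators `P`. -/
def cell {n : ℕ} (P : Finset (EuclideanSpace ℝ (Fin n))) (p : EuclideanSpace ℝ (Fin n)) :
    Set (EuclideanSpace ℝ (Fin n)) :=
  {x | ∀ q ∈ P, dist x p ≤ dist x q}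

/-- `D_E(P)`: the maximum diameter of a Voronoi cell of `P` intersecting `E`
(valued in `ℝ≥0∞`, since cells may be unbounded). -/
noncomputable def maxCellDiam {n : ℕ} (P : Finset (EuclideanSpace ℝ (Fin n)))
    (E : Set (EuclideanSpace ℝ (Fin n))) : ENNReal :=
  ⨆ p ∈ P, ⨆ _ : (cell P p ∩ E).Nonempty, EMetric.diam (cell P p)

lemma convex_setOf_dist_le_dist {F : Type*} [NormedAddCommGroup F] [InnerProductSpace ℝ F]
    (p q : F) : Convex ℝ {x | dist x p ≤ dist x q} := by
  have hhalf : {x | dist x p ≤ dist x q} =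
      {x | inner ℝ (q - p) x ≤ (‖q‖ ^ 2 - ‖p‖ ^ 2) / 2} := by
    ext x
    simp only [mem_ofPred_eq, dist_eq_norm]
    rw [← pow_le_pow_iff_left₀ (norm_nonneg _) (norm_nonneg _) two_ne_zero,
      norm_sub_sq_real, norm_sub_sq_real, inner_sub_left, real_inner_comm x p,
      real_inner_comm x q]
    constructor <;> intro h <;> linarith
  rw [hhalf]
  exact convex_halfSpace_le (innerₛₗ ℝ (q - p)).isLinear _

lemma convex_cell {n : ℕ} (P : Finset (EuclideanSpace ℝ (Fin n))) (p : EuclideanSpace ℝ (Fin n)) :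
    Convex ℝ (cell P p) := by
  simpa only [cell, ofPred_forall] using
    convex_iInter₂ fun q (_ : q ∈ P) => convex_setOf_dist_le_dist p q

lemma IsPreconnected.subset_ball_of_disjoint_sphere {X : Type*} [PseudoMetricSpace X]
    {s : Set X} {x : X} {R : ℝ} (hs : IsPreconnected s) (hx : x ∈ s) (hR : 0 < R)
    (hdisj : Disjoint s (sphere x R)) : s ⊆ ball x R := by
  refine hs.subset_left_of_subset_union isOpen_ball isClosed_closedBall.isOpen_compl
    (disjoint_compl_right.mono_left ball_subset_closedBall) (fun z hz => ?_)
    ⟨x, hx, mem_ball_self hR⟩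
  have hzR : dist z x ≠ R := disjoint_left.1 hdisj hz
  exact hzR.lt_or_gt.imp id not_le.2

/-- Points of the cell at distance `3δ` from `x` would lie within `δ` of `p`, as `x` does, hence
within `2δ` of `x`; so the convex cell cannot cross the sphere of radius `3δ` around `x`. -/
lemma cell_subset_ball {n : ℕ} {P : Finset (EuclideanSpace ℝ (Fin n))}
    {c x p : EuclideanSpace ℝ (Fin n)} {r δ : ℝ} (hδ : 0 < δ)
    (hdense : ∀ z ∈ closedBall c (r + 3 * δ), ∃ q ∈ P, dist z q ≤ δ)
    (hxc : x ∈ closedBall c r) (hx : x ∈ cell P p) :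
    cell P p ⊆ ball x (3 * δ) := by
  have near : ∀ y ∈ cell P p, y ∈ closedBall c (r + 3 * δ) → dist y p ≤ δ := by
    intro y hy hyc
    obtain ⟨q, hq, hyq⟩ := hdense y hyc
    exact (hy q hq).trans hyq
  have hxp : dist x p ≤ δ := near x hx (closedBall_subset_closedBall (by linarith) hxc)
  refine (convex_cell P p).isPreconnected.subset_ball_of_disjoint_sphere hx (by positivity)
    (disjoint_left.2 fun z hz hzx => ?_)
  rw [mem_sphere] at hzx
  rw [mem_closedBall] at hxc
  have hzp : dist z p ≤ δ := near z hz (by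
    rw [mem_closedBall]
    linarith [dist_triangle z x c])
  linarith [dist_triangle z p x, dist_comm p x]

lemma maxCellDiam_le {n : ℕ} {P : Finset (EuclideanSpace ℝ (Fin n))}
    {E : Set (EuclideanSpace ℝ (Fin n))} {c : EuclideanSpace ℝ (Fin n)} {r δ : ℝ} (hδ : 0 < δ)
    (hE : E ⊆ closedBall c r)
    (hdense : ∀ z ∈ closedBall c (r + 3 * δ), ∃ q ∈ P, dist z q ≤ δ) :
    maxCellDiam P E ≤ ENNReal.ofReal (6 * δ) := by
  refine iSup₂_le fun p _ => iSup_le fun ⟨x, hxp, hxE⟩ => ?_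
  have hsub := cell_subset_ball hδ hdense (hE hxE) hxp
  refine ediam_le_of_forall_dist_le fun a ha b hb => ?_
  linarith [dist_triangle_right a b x, mem_ball.1 (hsub ha), mem_ball.1 (hsub hb)]

lemma maxCellDiam_le_of_cover {n : ℕ} {P : Finset (EuclideanSpace ℝ (Fin n))}
    {E : Set (EuclideanSpace ℝ (Fin n))} {c : EuclideanSpace ℝ (Fin n)} {r δ : ℝ}
    {T : Set (EuclideanSpace ℝ (Fin n))} (hδ : 0 < δ) (hE : E ⊆ closedBall c r)
    (hT : closedBall c (r + 3 * δ) ⊆ ⋃ y ∈ T, ball y (δ / 2))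
    (hhit : ∀ y ∈ T, ∃ q ∈ P, q ∈ ball y (δ / 2)) :
    maxCellDiam P E ≤ ENNReal.ofReal (6 * δ) := by
  refine maxCellDiam_le hδ hE fun z hz => ?_
  obtain ⟨y, hyT, hzy⟩ := mem_iUnion₂.1 (hT hz)
  obtain ⟨q, hqP, hqy⟩ := hhit y hyT
  exact ⟨q, hqP, by linarith [dist_triangle_right z q y, mem_ball.1 hzy, mem_ball.1 hqy]⟩

section Sampling

variable {Ω F : Type*} [MeasurableSpace Ω] [MeasurableSpace F] {Pr : Measure Ω}
  {μ : Measure F} {X : ℕ → Ω → F}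

lemma measure_forall_lt_notMem_eq_pow (hXmeas : ∀ i, Measurable (X i))
    (hXdist : ∀ i, Measure.map (X i) Pr = μ) (hXindep : ProbabilityTheory.iIndepFun X Pr)
    {B : Set F} (hB : MeasurableSet B) (m : ℕ) :
    Pr {ω | ∀ j < m, X j ω ∉ B} = μ Bᶜ ^ m := by
  have hinter : {ω | ∀ j < m, X j ω ∉ B} = ⋂ j ∈ Finset.range m, X j ⁻¹' Bᶜ := by
    ext ω
    simp
  rw [hinter, ProbabilityTheory.iIndepFun_iff_measure_inter_preimage_eq_mul.1 hXindep _
    (sets := fun _ => Bᶜ) fun _ _ => hB.compl]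
  simp_rw [← Measure.map_apply (hXmeas _) hB.compl, hXdist, Finset.prod_const,
    Finset.card_range]

lemma tendsto_measure_forall_lt_notMem [IsProbabilityMeasure μ]
    (hXmeas : ∀ i, Measurable (X i)) (hXdist : ∀ i, Measure.map (X i) Pr = μ)
    (hXindep : ProbabilityTheory.iIndepFun X Pr) {B : Set F} (hB : MeasurableSet B)
    (hμB : 0 < μ B) :
    Tendsto (fun m => Pr {ω | ∀ j < m, X j ω ∉ B}) atTop (nhds 0) := by
  simp_rw [measure_forall_lt_notMem_eq_pow hXmeas hXdist hXindep hB]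
  refine ENNReal.tendsto_pow_atTop_nhds_zero_of_lt_one ?_
  rw [prob_compl_eq_one_sub hB]
  exact ENNReal.sub_lt_self ENNReal.one_ne_top one_ne_zero hμB.ne'

end Sampling

theorem max_cell_diameter_tendsto_zero_in_probability_general {n : ℕ}
    {Ω : Type*} [MeasurableSpace Ω] (Pr : Measure Ω)
    (μ : Measure (EuclideanSpace ℝ (Fin n)))
    (hμprob : IsProbabilityMeasure μ)
    (hsupp : ∀ U : Set (EuclideanSpace ℝ (Fin n)), IsOpen U → U.Nonempty → 0 < μ U)
    -- the i.i.d. samples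
    (X : ℕ → Ω → EuclideanSpace ℝ (Fin n))
    (hXmeas : ∀ i, Measurable (X i))
    (hXdist : ∀ i, Measure.map (X i) Pr = μ)
    (hXindep : ProbabilityTheory.iIndepFun X Pr)
    -- the generators: the first `m` samples
    (P : ℕ → Ω → Finset (EuclideanSpace ℝ (Fin n)))
    (hP : ∀ m ω, (P m ω : Set (EuclideanSpace ℝ (Fin n))) = (fun i => X i ω) '' Set.Iio m)
    (E : Set (EuclideanSpace ℝ (Fin n)))
    (hEbdd : Bornology.IsBounded E) :
    ∀ ε : ℝ, 0 < ε →
      Tendsto (fun m => Pr {ω | ENNReal.ofReal ε < maxCellDiam (P m ω) E})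
        atTop (nhds 0) := by
  intro ε hε
  obtain ⟨δ, hδ, rfl⟩ : ∃ δ, 0 < δ ∧ ε = 6 * δ := ⟨ε / 6, by positivity, by ring⟩
  obtain ⟨r, hEr⟩ := hEbdd.subset_closedBall 0
  obtain ⟨T, -, hT, hcover⟩ :=
    finite_cover_balls_of_compact
      (isCompact_closedBall (0 : EuclideanSpace ℝ (Fin n)) (r + 3 * δ)) (half_pos hδ)
  have hbad : ∀ m, {ω | ENNReal.ofReal (6 * δ) < maxCellDiam (P m ω) E} ⊆
      ⋃ y ∈ hT.toFinset, {ω | ∀ j < m, X j ω ∉ ball y (δ / 2)} := by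
    intro m ω hω
    by_contra hhit
    simp only [mem_iUnion, mem_ofPred_eq, Finite.mem_toFinset, not_exists, not_forall,
      not_not] at hhit
    refine hω.not_ge (maxCellDiam_le_of_cover hδ hEr hcover fun y hy => ?_)
    obtain ⟨j, hj, hjy⟩ := hhit y hy
    exact ⟨X j ω, by rw [← Finset.mem_coe, hP]; exact ⟨j, hj, rfl⟩, hjy⟩
  have hnet : Tendsto (fun m => ∑ y ∈ hT.toFinset, Pr {ω | ∀ j < m, X j ω ∉ ball y (δ / 2)})
      atTop (nhds 0) := by
    simpa using tendsto_finsetSum hT.toFinset fun y _ =>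
      tendsto_measure_forall_lt_notMem hXmeas hXdist hXindep measurableSet_ball
        (hsupp _ isOpen_ball (nonempty_ball.2 (half_pos hδ)))
  exact tendsto_of_tendsto_of_tendsto_of_le_of_le tendsto_const_nhds hnet (fun _ => zero_le)
    fun m => (measure_mono (hbad m)).trans (measure_biUnion_finset_le _ _)

/-- for a full-support density `ρ` and a nonempty bounded measurable set `E`,
the maximum diameter `D_E` of the Voronoi cells intersecting `E`, viewed as a random
variable in `m` i.i.d. generators, converges in probability to `0` as `m → ∞`. -/
theorem max_cell_diameter_tendsto_zero_in_probability {n : ℕ}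
    {Ω : Type*} [MeasurableSpace Ω] (Pr : Measure Ω) [IsProbabilityMeasure Pr]
    (ρ : EuclideanSpace ℝ (Fin n) → ℝ) (hρ0 : ∀ x, 0 ≤ ρ x) (hρint : Integrable ρ volume)
    (μ : Measure (EuclideanSpace ℝ (Fin n)))
    (hμ : μ = volume.withDensity fun x => ENNReal.ofReal (ρ x))
    (hμprob : IsProbabilityMeasure μ)
    (hsupp : ∀ U : Set (EuclideanSpace ℝ (Fin n)), IsOpen U → U.Nonempty → 0 < μ U)
    -- the i.i.d. samples
    (X : ℕ → Ω → EuclideanSpace ℝ (Fin n))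
    (hXmeas : ∀ i, Measurable (X i))
    (hXdist : ∀ i, Measure.map (X i) Pr = μ)
    (hXindep : ProbabilityTheory.iIndepFun X Pr)
    -- the generators: the first `m` samples
    (P : ℕ → Ω → Finset (EuclideanSpace ℝ (Fin n)))
    (hP : ∀ m ω, (P m ω : Set (EuclideanSpace ℝ (Fin n))) = (fun i => X i ω) '' Set.Iio m)
    (E : Set (EuclideanSpace ℝ (Fin n))) (hEne : E.Nonempty) (hEmeas : MeasurableSet E)
    (hEbdd : Bornology.IsBounded E) :
    ∀ ε : ℝ, 0 < ε →
      Tendsto (fun m => Pr {ω | ENNReal.ofReal ε < maxCellDiam (P m ω) E})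
        atTop (nhds 0) :=
  max_cell_diameter_tendsto_zero_in_probability_general Pr μ hμprob hsupp X hXmeas hXdist hXindep P
    hP E hEbdd
end
end

section
/- Let P ⊆ ℝⁿ be a fixed finite set of distinct generators and let K : ℝⁿ → ℝ≥0 be continuous, integrable, with K(0) > 0 and ∫_{ℝⁿ} K > 0. For h > 0, let f_h be the CVDE built on P with kernel K_h(p,x) = K((p − x)/h). Then, as h → 0, the probability measures f_h dx converge in distribution (weakly) to the empirical measure (1/|P|) Σ_{p ∈ P} δ_p, where δ_p is the Dirac measure at p. -/
open MeasureTheory Metric Set Filter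

noncomputable section

/-- A choice of a nearest generator (the generator of the cell containing `x`;
uniquely determined off the cell boundaries). -/
noncomputable def nearest {n : ℕ} (P : Finset (EuclideanSpace ℝ (Fin n)))
    (x : EuclideanSpace ℝ (Fin n)) : EuclideanSpace ℝ (Fin n) :=
  if h : P.Nonempty then (P.exists_min_image (fun p => dist x p) h).choose else 0

/-- The Compactified Voronoi Density Estimator:
`f(x) = K(p,x) / (|P| · vol_p(C(x)))` where `p` is the generator of `C(x)`. -/
noncomputable def cvde {n : ℕ} (P : Finset (EuclideanSpace ℝ (Fin n)))
    (K : EuclideanSpace ℝ (Fin n) → EuclideanSpace ℝ (Fin n) → ℝ)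
    (x : EuclideanSpace ℝ (Fin n)) : ℝ :=
  K (nearest P x) x / (P.card * ∫ y in cell P (nearest P x), K (nearest P x) y)


/-!
Off the cell boundaries, which are null, the CVDE measure is `Σ_p` of the restriction of
`K((p - x)/h) dx` to `cell P p`, normalised to mass `1/|P|`. Since `p` is interior to its cell, the
substitution `x = p - h • v` blows `cell P p` up to the whole space as `h → 0`, and dominated
convergence shows that the normalised restriction tested against `φ` tends to `φ p`.
-/

open Topology
open scoped BoundedContinuousFunction

section RescaledKernel

variable {E : Type*} [NormedAddCommGroup E] [NormedSpace ℝ E] [FiniteDimensional ℝ E]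
  [MeasurableSpace E] [BorelSpace E] (μ : Measure E) [μ.IsAddHaarMeasure]

theorem integral_comp_sub_smul {G : Type*} [NormedAddCommGroup G] [NormedSpace ℝ G]
    (F : E → G) (p : E) {h : ℝ} (hh : 0 < h) :
    ∫ v, F (p - h • v) ∂μ = (h ^ Module.finrank ℝ E)⁻¹ • ∫ x, F x ∂μ := by
  rw [Measure.integral_comp_smul μ (fun u => F (p - u)), integral_sub_left_eq_self F μ p,
    abs_of_pos (by positivity)]

theorem tendsto_rescaled_setIntegral {K : E → ℝ} (hK : Integrable K μ) {s : Set E} {p : E}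
    (hs : s ∈ 𝓝 p) (hsm : MeasurableSet s) (g : E →ᵇ ℝ) :
    Tendsto (fun h : ℝ => (h ^ Module.finrank ℝ E)⁻¹ * ∫ x in s, g x * K (h⁻¹ • (p - x)) ∂μ)
      (𝓝[>] 0) (𝓝 (g p * ∫ v, K v ∂μ)) := by
  have hpath : ∀ v : E, Continuous fun h : ℝ => p - h • v := fun v =>
    continuous_const.sub (continuous_id.smul continuous_const)
  set F : ℝ → E → ℝ := fun h =>
    ((fun v => p - h • v) ⁻¹' s).indicator fun v => g (p - h • v) * K v with hF_def
  have hF : ∀ h > 0,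
      (h ^ Module.finrank ℝ E)⁻¹ * ∫ x in s, g x * K (h⁻¹ • (p - x)) ∂μ = ∫ v, F h v ∂μ := by
    intro h hh
    rw [← integral_indicator hsm, ← smul_eq_mul, ← integral_comp_sub_smul μ _ p hh]
    refine integral_congr_ae (Eventually.of_forall fun v => ?_)
    simp only [hF_def, ← indicator_comp_right (fun v => p - h • v)]
    simp only [Function.comp_def, sub_sub_cancel, inv_smul_smul₀ hh.ne']
  have hmem : ∀ v, ∀ᶠ h in 𝓝[>] (0 : ℝ), p - h • v ∈ s := fun v =>
    ((hpath v).tendsto' 0 p (by simp)).mono_left nhdsWithin_le_nhds |>.eventually hs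
  refine Tendsto.congr' (eventually_mem_nhdsWithin.mono fun h hh => (hF h hh).symm) ?_
  rw [← integral_const_mul]
  refine tendsto_integral_filter_of_dominated_convergence (fun v => ‖g‖ * ‖K v‖)
    (Eventually.of_forall fun h => ?_) (Eventually.of_forall fun h => ?_)
    (hK.norm.const_mul _) (Eventually.of_forall fun v => ?_)
  · have hshift : Continuous fun v : E => p - h • v :=
      continuous_const.sub (continuous_const_smul h)
    exact ((g.continuous.comp hshift).aestronglyMeasurable.mul hK.aestronglyMeasurable).indicator
      (hsm.preimage hshift.measurable)
  · refine Eventually.of_forall fun v => (norm_indicator_le_norm_self _ v).trans ?_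
    rw [norm_mul]
    exact mul_le_mul_of_nonneg_right (g.norm_coe_le_norm _) (norm_nonneg _)
  · have hg : Tendsto (fun h : ℝ => g (p - h • v)) (𝓝[>] 0) (𝓝 (g p)) :=
      ((g.continuous.comp (hpath v)).tendsto' 0 (g p) (by simp)).mono_left nhdsWithin_le_nhds
    exact (hg.mul_const (K v)).congr' ((hmem v).mono fun h hh =>
      (indicator_of_mem (show v ∈ (fun v => p - h • v) ⁻¹' s from hh) _).symm)

theorem tendsto_setIntegral_mul_rescaled_div {K : E → ℝ} (hK : Integrable K μ)
    (hK_ne : ∫ v, K v ∂μ ≠ 0) {s : Set E} {p : E} (hs : s ∈ 𝓝 p) (hsm : MeasurableSet s)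
    (g : E →ᵇ ℝ) :
    Tendsto (fun h : ℝ => (∫ x in s, g x * K (h⁻¹ • (p - x)) ∂μ) / ∫ x in s, K (h⁻¹ • (p - x)) ∂μ)
      (𝓝[>] 0) (𝓝 (g p)) := by
  have hnum := tendsto_rescaled_setIntegral μ hK hs hsm g
  have hden := tendsto_rescaled_setIntegral μ hK hs hsm 1
  simp only [BoundedContinuousFunction.coe_one, Pi.one_apply, one_mul] at hden
  have hlim := hnum.div hden hK_ne
  rw [mul_div_cancel_right₀ _ hK_ne] at hlim
  refine hlim.congr' (eventually_mem_nhdsWithin.mono fun h hh => ?_)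
  exact mul_div_mul_left _ _ (inv_ne_zero (pow_ne_zero _ (ne_of_gt hh)))

end RescaledKernel

theorem ae_dist_ne_dist {E : Type*} [NormedAddCommGroup E] [InnerProductSpace ℝ E]
    [FiniteDimensional ℝ E] [MeasurableSpace E] [BorelSpace E] (μ : Measure E)
    [μ.IsAddHaarMeasure] {p q : E} (hpq : p ≠ q) : ∀ᵐ x ∂μ, dist x p ≠ dist x q := by
  have hnull : μ (AffineSubspace.perpBisector p q) = 0 :=
    Measure.addHaar_affineSubspace μ _ (by simpa using hpq)
  filter_upwards [measure_eq_zero_iff_ae_notMem.mp hnull] with x hx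
  rwa [SetLike.mem_coe, AffineSubspace.mem_perpBisector_iff_dist_eq] at hx

section Voronoi

variable {n : ℕ}

theorem nearest_mem {P : Finset (EuclideanSpace ℝ (Fin n))} (hP : P.Nonempty)
    (x : EuclideanSpace ℝ (Fin n)) : nearest P x ∈ P := by
  rw [nearest, dif_pos hP]
  exact (P.exists_min_image _ hP).choose_spec.1

theorem mem_cell_nearest {P : Finset (EuclideanSpace ℝ (Fin n))} (hP : P.Nonempty)
    (x : EuclideanSpace ℝ (Fin n)) : x ∈ cell P (nearest P x) := by
  rw [nearest, dif_pos hP]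
  exact (P.exists_min_image _ hP).choose_spec.2

theorem isClosed_cell (P : Finset (EuclideanSpace ℝ (Fin n))) (p : EuclideanSpace ℝ (Fin n)) :
    IsClosed (cell P p) := by
  simp only [cell, ofPred_forall]
  exact isClosed_biInter fun q _ =>
    isClosed_le (continuous_id.dist continuous_const) (continuous_id.dist continuous_const)

theorem cell_mem_nhds (P : Finset (EuclideanSpace ℝ (Fin n))) (p : EuclideanSpace ℝ (Fin n)) :
    cell P p ∈ 𝓝 p := by
  show ∀ᶠ x in 𝓝 p, ∀ q ∈ P, dist x p ≤ dist x q
  refine (eventually_all_finset P).2 fun q _ => ?_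
  rcases eq_or_ne q p with rfl | hqp
  · exact Eventually.of_forall fun _ => le_rfl
  · have hlt : dist p p < dist p q := by simpa using hqp.symm
    exact ((continuous_id.dist continuous_const).continuousAt.eventually_lt
      (continuous_id.dist continuous_const).continuousAt hlt).mono fun _ => le_of_lt

theorem ae_eq_nearest_of_mem_cell (P : Finset (EuclideanSpace ℝ (Fin n))) :
    ∀ᵐ x, ∀ p ∈ P, x ∈ cell P p → p = nearest P x := by
  have hsep : ∀ᵐ x, ∀ p ∈ P, ∀ q ∈ P, p ≠ q → dist x p ≠ dist x q := by
    refine (eventually_all_finset P).2 fun p _ => (eventually_all_finset P).2 fun q _ => ?_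
    exact eventually_imp_distrib_left.2 fun hpq => ae_dist_ne_dist volume hpq
  filter_upwards [hsep] with x hx p hp hxp
  have hP : P.Nonempty := ⟨p, hp⟩
  by_contra hne
  exact hx p hp _ (nearest_mem hP x) hne
    (le_antisymm (hxp _ (nearest_mem hP x)) (mem_cell_nearest hP x p hp))

theorem cvde_ae_eq_sum_indicator (P : Finset (EuclideanSpace ℝ (Fin n)))
    (K : EuclideanSpace ℝ (Fin n) → EuclideanSpace ℝ (Fin n) → ℝ) :
    cvde P K =ᵐ[volume] fun x => ∑ p ∈ P,
      (cell P p).indicator (fun y => K p y / (P.card * ∫ z in cell P p, K p z)) x := by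
  filter_upwards [ae_eq_nearest_of_mem_cell P] with x hx
  rcases P.eq_empty_or_nonempty with rfl | hP
  · -- `cvde ∅ K x` divides by `(∅.card : ℝ) = 0`
    simp [cvde]
  rw [Finset.sum_eq_single_of_mem _ (nearest_mem hP x) fun q hq hne =>
      indicator_of_notMem (fun hxq => hne (hx q hq hxq)) _,
    indicator_of_mem (mem_cell_nearest hP x)]
  rfl

theorem integral_withDensity_cvde {P : Finset (EuclideanSpace ℝ (Fin n))}
    {K : EuclideanSpace ℝ (Fin n) → EuclideanSpace ℝ (Fin n) → ℝ}
    (hK0 : ∀ p ∈ P, ∀ x, 0 ≤ K p x) (hK : ∀ p ∈ P, Integrable (K p))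
    (φ : BoundedContinuousFunction (EuclideanSpace ℝ (Fin n)) ℝ) :
    ∫ x, φ x ∂(volume.withDensity fun x => ENNReal.ofReal (cvde P K x)) =
      ∑ p ∈ P, (∫ x in cell P p, φ x * K p x) / (P.card * ∫ x in cell P p, K p x) := by
  set c : EuclideanSpace ℝ (Fin n) → ℝ := fun p => P.card * ∫ x in cell P p, K p x
  set f := fun x => ∑ p ∈ P, (cell P p).indicator (fun y => K p y / c p) x with hf_def
  have hpiece : ∀ p ∈ P, Integrable ((cell P p).indicator fun y => K p y / c p) := fun p hp =>
    ((hK p hp).div_const _).indicator (isClosed_cell P p).measurableSet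
  have hf0 : ∀ x, 0 ≤ f x := fun x => Finset.sum_nonneg fun p hp =>
    indicator_nonneg (fun y _ => div_nonneg (hK0 p hp y) (mul_nonneg (Nat.cast_nonneg _)
      (setIntegral_nonneg (isClosed_cell P p).measurableSet fun z _ => hK0 p hp z))) x
  have hfm : AEMeasurable fun x => (f x).toNNReal :=
    (Finset.aestronglyMeasurable_fun_sum P fun p hp => (hpiece p hp).aestronglyMeasurable)
      |>.aemeasurable.real_toNNReal
  have hdens : (fun x => ENNReal.ofReal (cvde P K x)) =ᵐ[volume]
      fun x => ((f x).toNNReal : ENNReal) := by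
    filter_upwards [cvde_ae_eq_sum_indicator P K] with x hx
    rw [hx]
    rfl
  calc ∫ x, φ x ∂(volume.withDensity fun x => ENNReal.ofReal (cvde P K x))
      = ∫ x, f x * φ x := by
        rw [withDensity_congr_ae hdens, integral_withDensity_eq_integral_smul₀ hfm]
        simp only [NNReal.smul_def, smul_eq_mul, Real.coe_toNNReal _ (hf0 _)]
    _ = ∑ p ∈ P, ∫ x in cell P p, φ x * K p x / c p := by
        simp only [hf_def, Finset.sum_mul]
        rw [integral_finsetSum _ fun p hp => (hpiece p hp).mul_bdd
          φ.continuous.aestronglyMeasurable (Eventually.of_forall φ.norm_coe_le_norm)]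
        refine Finset.sum_congr rfl fun p _ => ?_
        simp_rw [← indicator_mul_left]
        rw [integral_indicator (isClosed_cell P p).measurableSet]
        refine integral_congr_ae (Eventually.of_forall fun x => ?_)
        ring
    _ = _ := by simp only [integral_div]; rfl

end Voronoi

theorem cvde_tendsto_empirical_of_bandwidth_zero_general {n : ℕ}
    (P : Finset (EuclideanSpace ℝ (Fin n)))
    (K : EuclideanSpace ℝ (Fin n) → ℝ)
    (hK0 : ∀ x, 0 ≤ K x) (hKint : Integrable K volume)
    (hKtot : 0 < ∫ u, K u) :
    ∀ φ : BoundedContinuousFunction (EuclideanSpace ℝ (Fin n)) ℝ,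
      Tendsto (fun h : ℝ =>
          ∫ x, φ x ∂(volume.withDensity fun x =>
            ENNReal.ofReal (cvde P (fun p y => K (h⁻¹ • (p - y))) x)))
        (nhdsWithin 0 (Set.Ioi 0))
        (nhds ((1 / P.card) * ∑ p ∈ P, φ p)) := by
  intro φ
  have hKh : ∀ h : ℝ, h ≠ 0 → ∀ p, Integrable (fun x => K (h⁻¹ • (p - x))) := fun h hh p =>
    ((integrable_comp_smul_iff volume K (inv_ne_zero hh)).2 hKint).comp_sub_left p
  have hterm : ∀ p ∈ P, Tendsto (fun h : ℝ => (∫ x in cell P p, φ x * K (h⁻¹ • (p - x))) /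
      ∫ x in cell P p, K (h⁻¹ • (p - x))) (𝓝[>] 0) (𝓝 (φ p)) := fun p _ =>
    tendsto_setIntegral_mul_rescaled_div volume hKint hKtot.ne' (cell_mem_nhds P p)
      (isClosed_cell P p).measurableSet φ
  refine ((tendsto_finsetSum P hterm).const_mul (1 / (P.card : ℝ))).congr' ?_
  filter_upwards [self_mem_nhdsWithin] with h hh
  rw [integral_withDensity_cvde (K := fun p y => K (h⁻¹ • (p - y))) (fun p _ x => hK0 _)
    (fun p _ => hKh h (ne_of_gt hh) p), Finset.mul_sum]
  refine Finset.sum_congr rfl fun p _ => ?_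
  ring

/-- as `h → 0⁺`, the CVDE measures `f_h dx` built with the rescaled kernel
`K_h(p,x) = K((p−x)/h)` converge weakly (i.e. tested against every bounded continuous
function) to the empirical measure `(1/|P|) Σ_{p∈P} δ_p`. -/
theorem cvde_tendsto_empirical_of_bandwidth_zero {n : ℕ}
    (P : Finset (EuclideanSpace ℝ (Fin n))) (hP : P.Nonempty)
    (K : EuclideanSpace ℝ (Fin n) → ℝ)
    (hKcont : Continuous K) (hK0 : ∀ x, 0 ≤ K x) (hKint : Integrable K volume)
    (hK00 : 0 < K 0) (hKtot : 0 < ∫ u, K u) :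
    ∀ φ : BoundedContinuousFunction (EuclideanSpace ℝ (Fin n)) ℝ,
      Tendsto (fun h : ℝ =>
          ∫ x, φ x ∂(volume.withDensity fun x =>
            ENNReal.ofReal (cvde P (fun p y => K (h⁻¹ • (p - y))) x)))
        (nhdsWithin 0 (Set.Ioi 0))
        (nhds ((1 / P.card) * ∑ p ∈ P, φ p)) :=
  cvde_tendsto_empirical_of_bandwidth_zero_general P K hK0 hKint hKtot
end
end
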